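/- The map (u,v) ↦ ((uv-4)/(u-v), (u²-2uv+4)/(2(u-v))) is a bijection from the set {(u,v) ∈ (2,∞)² : u² - 2uv + 4 > 0} onto (2,∞) × (0,∞). -/

import Mathlib

/-!
The map has an explicit rational inverse. Writing `(x, y)` for the image of `(u, v)`, one has
`x + 2y = u` and `x (x + 2y) + 4 = 2v (x + y)`, so `(u, v)` is recovered as
`(x + 2y, (x² + 2xy + 4) / (2(x + y)))`. Both maps are defined off the degenerate loci
`u = v`, `u² = 4`, `x + y = 0`, `(x + 2y)² = 4`, which the two regions avoid.
-/

section Field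

variable {K : Type*} [Field K] [NeZero (2 : K)]

def uvMap (p : K × K) : K × K :=
  ((p.1 * p.2 - 4) / (p.1 - p.2), (p.1 ^ 2 - 2 * p.1 * p.2 + 4) / (2 * (p.1 - p.2)))

def uvMapInv (q : K × K) : K × K :=
  (q.1 + 2 * q.2, (q.1 ^ 2 + 2 * q.1 * q.2 + 4) / (2 * (q.1 + q.2)))

theorem uvMapInv_uvMap {u v : K} (huv : u - v ≠ 0) (hu : u ^ 2 - 4 ≠ 0) :
    uvMapInv (uvMap (u, v)) = (u, v) := by
  set x := (u * v - 4) / (u - v)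
  set y := (u ^ 2 - 2 * u * v + 4) / (2 * (u - v))
  have hfst : x + 2 * y = u := by
    simp only [x, y]; field_simp; ring
  have hsum : 2 * (x + y) = (u ^ 2 - 4) / (u - v) := by
    simp only [x, y]; field_simp; ring
  have hnum : x ^ 2 + 2 * x * y + 4 = v * ((u ^ 2 - 4) / (u - v)) := by
    rw [show x ^ 2 + 2 * x * y + 4 = x * (x + 2 * y) + 4 by ring, hfst]
    simp only [x]; field_simp; ring
  simp only [uvMap, uvMapInv]
  rw [hfst, hsum, hnum, mul_div_cancel_right₀ _ (div_ne_zero hu huv)]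

theorem uvMapInv_fst_sub_snd {x y : K} (hxy : x + y ≠ 0) :
    (uvMapInv (x, y)).1 - (uvMapInv (x, y)).2 = ((x + 2 * y) ^ 2 - 4) / (2 * (x + y)) := by
  simp only [uvMapInv]
  field_simp
  ring

theorem uvMap_uvMapInv {x y : K} (hxy : x + y ≠ 0) (h : (x + 2 * y) ^ 2 - 4 ≠ 0) :
    uvMap (uvMapInv (x, y)) = (x, y) := by
  have hsub := uvMapInv_fst_sub_snd hxy
  simp only [uvMapInv] at hsub
  simp only [uvMap, uvMapInv, Prod.mk.injEq, hsub]
  constructor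
  · field_simp
    ring
  · field_simp
    ring

end Field

def uvDomain : Set (ℝ × ℝ) := {p | 2 < p.1 ∧ 2 < p.2 ∧ p.1 ^ 2 - 2 * p.1 * p.2 + 4 > 0}

theorem lt_of_two_le_of_sq_sub_two_mul_add_four_pos {u v : ℝ} (hu : 2 ≤ u)
    (h : u ^ 2 - 2 * u * v + 4 > 0) : v < u := by
  by_contra! hvu
  nlinarith

theorem mapsTo_uvMap : Set.MapsTo uvMap uvDomain (Set.Ioi 2 ×ˢ Set.Ioi 0) := by
  rintro ⟨u, v⟩ ⟨hu, hv, h⟩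
  have huv : 0 < u - v := sub_pos.2 (lt_of_two_le_of_sq_sub_two_mul_add_four_pos hu.le h)
  refine ⟨?_, div_pos h (by positivity)⟩
  show 2 < (u * v - 4) / (u - v)
  rw [lt_div_iff₀ huv]
  nlinarith [mul_pos (by linarith : 0 < u + 2) (sub_pos.2 hv)]

theorem mapsTo_uvMapInv : Set.MapsTo uvMapInv (Set.Ioi 2 ×ˢ Set.Ioi 0) uvDomain := by
  rintro ⟨x, y⟩ ⟨hx, hy⟩
  simp only [Set.mem_Ioi] at hx hy
  have hxy : 0 < x + y := by linarith
  have huv : 0 < (uvMapInv (x, y)).1 - (uvMapInv (x, y)).2 := by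
    rw [uvMapInv_fst_sub_snd hxy.ne']
    exact div_pos (by nlinarith) (by positivity)
  refine ⟨by simp only [uvMapInv]; linarith, ?_, ?_⟩
  · simp only [uvMapInv]
    rw [lt_div_iff₀ (by positivity)]
    nlinarith [mul_pos (sub_pos.2 hx) (by linarith : 0 < x - 2 + 2 * y)]
  · have hsnd := congrArg Prod.snd (uvMap_uvMapInv hxy.ne' (by nlinarith))
    simp only [uvMap] at hsnd
    rw [div_eq_iff (by positivity)] at hsnd
    rw [hsnd]
    positivity

/-- The map `(u,v) ↦ ((uv-4)/(u-v), (u²-2uv+4)/(2(u-v)))` is a bijection from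
`{(u,v) ∈ (2,∞)² : u² - 2uv + 4 > 0}` onto `(2,∞) × (0,∞)`. -/
theorem stmt_0 :
    Set.BijOn
      (fun p : ℝ × ℝ =>
        ((p.1 * p.2 - 4) / (p.1 - p.2), (p.1 ^ 2 - 2 * p.1 * p.2 + 4) / (2 * (p.1 - p.2))))
      {p : ℝ × ℝ | 2 < p.1 ∧ 2 < p.2 ∧ p.1 ^ 2 - 2 * p.1 * p.2 + 4 > 0}
      (Set.Ioi (2 : ℝ) ×ˢ Set.Ioi (0 : ℝ)) := by
  refine Set.InvOn.bijOn (f' := uvMapInv) ⟨?_, ?_⟩ mapsTo_uvMap mapsTo_uvMapInv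
  · rintro ⟨u, v⟩ ⟨hu, -, h⟩
    have huv := lt_of_two_le_of_sq_sub_two_mul_add_four_pos hu.le h
    exact uvMapInv_uvMap (sub_ne_zero.2 huv.ne') (by nlinarith)
  · rintro ⟨x, y⟩ ⟨hx, hy⟩
    simp only [Set.mem_Ioi] at hx hy
    exact uvMap_uvMapInv (by linarith) (by nlinarith)
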